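/- For n ≥ 3: if a magic n-gon exists, then its center value is n + 1. -/

import Mathlib

/-- A magic `n`-gon: values `v i` at vertices, `m i` at the midpoint of the side
between `v i` and `v (i+1)`, and `c` at the center, all drawn injectively from
`{1, ..., 2n+1}`, such that every side sums to `s` and every diagonal (through
the center) sums to `s`.  For even `n` the diagonals join opposite vertices and
opposite midpoints; for odd `n` they join each vertex to the opposite midpoint. -/
def IsMagicNGon (n : ℕ) [NeZero n] (v m : ZMod n → ℕ) (c s : ℕ) : Prop :=
  Function.Injective (Sum.elim v (Sum.elim m (fun _ : Unit => c))) ∧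
  (∀ i, v i ∈ Finset.Icc 1 (2 * n + 1)) ∧
  (∀ i, m i ∈ Finset.Icc 1 (2 * n + 1)) ∧
  c ∈ Finset.Icc 1 (2 * n + 1) ∧
  (∀ i, v i + m i + v (i + 1) = s) ∧
  (if n % 2 = 0
    then ∀ i, v i + c + v (i + (n / 2 : ℕ)) = s ∧ m i + c + m (i + (n / 2 : ℕ)) = s
    else ∀ i, v i + c + m (i + (n / 2 : ℕ)) = s)

/-!
Summing the side and diagonal conditions over `ZMod n` (such sums are shift invariant) and
comparing with `1 + ⋯ + (2n+1) = (2n+1)(n+1)`: for even `n` this gives `∑ v = ∑ m = n c`,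
hence `(2n+1) c = (2n+1)(n+1)`. Odd `n = 2k+1` is impossible: side `j` and the diagonal
ending at its midpoint give `v j + v (j+1) = v (j+k+1) + c`, so any three consecutive vertices
sum to `3c`. Then `v` is 3-periodic, injectivity forces `3 ≡ 0 (mod n)`, hence `k + 1 ≡ 2`,
and the relation at `j = 0` yields `v 2 = c`.
-/

open Finset

theorem Finset.sum_Icc_one_id_mul_two (N : ℕ) : (∑ k ∈ Icc 1 N, k) * 2 = N * (N + 1) := by
  have h := sum_range_id_mul_two (N + 1)
  rw [range_eq_Ico, sum_eq_sum_Ico_succ_bot N.succ_pos] at h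
  simpa [Ico_add_one_right_eq_Icc, mul_comm] using h

theorem Fintype.sum_eq_sum_of_injective_of_card_le {ι M : Type*} [Fintype ι] [AddCommMonoid M]
    [DecidableEq M] {f : ι → M} {t : Finset M} (hf : Function.Injective f) (hft : ∀ i, f i ∈ t)
    (hcard : #t ≤ Fintype.card ι) : ∑ i, f i = ∑ x ∈ t, x := by
  have himage : univ.image f = t :=
    eq_of_subset_of_card_le (by simpa [subset_iff] using hft)
      (by rwa [card_image_of_injective _ hf, card_univ])
  rw [← himage, sum_image hf.injOn]

theorem Fintype.sum_add_add_sum_eq_card_smul {G M : Type*} [AddGroup G] [Fintype G]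
    [AddCommMonoid M] {f g : G → M} {d : G} {s : M} (h : ∀ i, f i + g i + f (i + d) = s) :
    ∑ i, f i + ∑ i, g i + ∑ i, f i = Fintype.card G • s := by
  rw [← card_univ, ← sum_const, ← Fintype.sum_congr _ _ h, sum_add_distrib, sum_add_distrib]
  exact congrArg _ (Equiv.sum_comp (Equiv.addRight d) f).symm

theorem ZMod.two_mul_natCast_div_two_add_one {n : ℕ} (hn : Odd n) :
    2 * ((n / 2 : ℕ) : ZMod n) + 1 = 0 := by
  have : ((2 * (n / 2) + 1 : ℕ) : ZMod n) = 0 := by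
    rw [← Nat.odd_iff.mp hn, Nat.div_add_mod, ZMod.natCast_self]
  exact_mod_cast this

namespace IsMagicNGon

variable {n : ℕ} [NeZero n] {v m : ZMod n → ℕ} {c s : ℕ}

theorem sum_add_sum_add_center (h : IsMagicNGon n v m c s) :
    ∑ i, v i + ∑ i, m i + c = (2 * n + 1) * (n + 1) := by
  obtain ⟨hinj, hv, hm, hc, -⟩ := h
  have hsum := Fintype.sum_eq_sum_of_injective_of_card_le hinj (t := Icc 1 (2 * n + 1))
    (by rintro (i | i | i) <;> simp [hv, hm, hc]) (by simp [ZMod.card]; omega)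
  simp only [Fintype.sum_sum_type, Sum.elim_inl, Sum.elim_inr, univ_unique, sum_singleton,
    ← add_assoc] at hsum
  have hgauss := sum_Icc_one_id_mul_two (2 * n + 1)
  rw [hsum]
  linarith

theorem center_eq_of_even (h : IsMagicNGon n v m c s) (hn : Even n) : c = n + 1 := by
  have htotal := h.sum_add_sum_add_center
  obtain ⟨-, -, -, -, hside, hdiag⟩ := h
  rw [if_pos (Nat.even_iff.mp hn)] at hdiag
  have hsides := Fintype.sum_add_add_sum_eq_card_smul hside
  have hvdiag := Fintype.sum_add_add_sum_eq_card_smul fun i => (hdiag i).1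
  have hmdiag := Fintype.sum_add_add_sum_eq_card_smul fun i => (hdiag i).2
  simp only [sum_const, card_univ, ZMod.card, smul_eq_mul] at hsides hvdiag hmdiag
  have : (2 * n + 1) * c = (2 * n + 1) * (n + 1) := by linarith
  exact Nat.eq_of_mul_eq_mul_left (by omega) this

-- Both sides equal `s - m j`: by side `j`, and by the diagonal from vertex `j - n / 2`,
-- which ends at the midpoint of side `j`.
theorem add_vertex_add_one_of_odd (h : IsMagicNGon n v m c s) (hn : Odd n) (j : ZMod n) :
    v j + v (j + 1) = v (j - (n / 2 : ℕ)) + c := by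
  obtain ⟨-, -, -, -, hside, hdiag⟩ := h
  rw [if_neg (Nat.not_even_iff_odd.mpr hn ∘ Nat.even_iff.mpr)] at hdiag
  have := hdiag (j - (n / 2 : ℕ))
  rw [sub_add_cancel] at this
  linarith [hside j]

theorem even (h : IsMagicNGon n v m c s) : Even n := by
  by_contra hodd
  rw [Nat.not_even_iff_odd] at hodd
  set k : ZMod n := ((n / 2 : ℕ) : ZMod n)
  have hk : 2 * k + 1 = 0 := ZMod.two_mul_natCast_div_two_add_one hodd
  have hrel : ∀ j, v j + v (j + 1) = v (j - k) + c := h.add_vertex_add_one_of_odd hodd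
  have hthree (j : ZMod n) : v j + v (j + 1) + v (j + 2) = 3 * c := by
    have h1 := hrel j
    have h2 := hrel (j + 1)
    have h3 := hrel (j - k)
    rw [show j + 1 + 1 = j + 2 by ring, show j + 1 - k = j - k + 1 by ring] at h2
    rw [show j - k - k = j + 1 by linear_combination -hk] at h3
    omega
  have h3 : (3 : ZMod n) = 0 := by
    have h0 := hthree 0
    have h1 := hthree 1
    rw [zero_add, zero_add] at h0
    rw [one_add_one_eq_two, show (1 : ZMod n) + 2 = 3 by norm_num] at h1
    have h03 : v 0 = v 3 := by omega
    simpa using (@h.1 (.inl 0) (.inl 3) h03).symm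
  have hk2 : -k = 2 := by linear_combination (-2) * hk + k * h3
  have : v 2 = c := by
    have h0 := hrel 0
    have h1 := hthree 0
    rw [zero_sub, hk2, zero_add] at h0
    rw [zero_add, zero_add] at h1
    omega
  exact Sum.inl_ne_inr (@h.1 (.inl 2) (.inr (.inr ())) this)

end IsMagicNGon

theorem center_eq_general (n : ℕ) [NeZero n] (v m : ZMod n → ℕ) (c s : ℕ)
    (h : IsMagicNGon n v m c s) : c = n + 1 :=
  h.center_eq_of_even h.even

theorem center_eq (n : ℕ) [NeZero n] (hn : 3 ≤ n) (v m : ZMod n → ℕ) (c s : ℕ)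
    (h : IsMagicNGon n v m c s) : c = n + 1 :=
  center_eq_general n v m c s h
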